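/- Let k be a field of characteristic p, where p is an odd prime. In the free associative k-algebra on generators x_1, x_2 set x_21 := x_2·x_1 + x_1·x_2. Let A be the quotient of this free algebra by the two-sided ideal generated by the four elements x_1^2, x_2·x_21 − x_21·x_2 − x_1·x_21, x_21^p, and x_2^{2p} (the super Jordan plane in characteristic p). Then the images of the monomials x_1^a·x_21^b·x_2^c with a ∈ {0,1}, 0 ≤ b ≤ p−1, 0 ≤ c ≤ 2p−1 form a k-basis of A; in particular dim_k A = 4p^2. -/
import Mathlib

noncomputable section


/-- The first generator of the free algebra on two generators. -/
def sjX1 (k : Type*) [Field k] : FreeAlgebra k (Fin 2) := FreeAlgebra.ι k 0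

/-- The second generator of the free algebra on two generators. -/
def sjX2 (k : Type*) [Field k] : FreeAlgebra k (Fin 2) := FreeAlgebra.ι k 1

/-- The element `x₂₁ = x₂x₁ + x₁x₂`. -/
def sjX21 (k : Type*) [Field k] : FreeAlgebra k (Fin 2) :=
  sjX2 k * sjX1 k + sjX1 k * sjX2 k

/-- The relation whose `RingQuot` is the quotient by the two-sided ideal generated by
`x₁²`, `x₂x₂₁ - x₂₁x₂ - x₁x₂₁`, `x₂₁ᵖ` and `x₂^{2p}` (the super Jordan plane). -/
def superJordanRel (k : Type*) [Field k] (p : ℕ) :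
    FreeAlgebra k (Fin 2) → FreeAlgebra k (Fin 2) → Prop := fun a b =>
  b = 0 ∧
    (a = sjX1 k ^ 2 ∨
     a = sjX2 k * sjX21 k - sjX21 k * sjX2 k - sjX1 k * sjX21 k ∨
     a = sjX21 k ^ p ∨
     a = sjX2 k ^ (2 * p))

/-- The image of the monomial `x₁^a x₂₁^b x₂^c` in the super Jordan plane. -/
def superJordanMono (k : Type*) [Field k] (p : ℕ) (m : Fin 2 × Fin p × Fin (2 * p)) :
    RingQuot (superJordanRel k p) :=
  RingQuot.mkAlgHom k (superJordanRel k p)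
    (sjX1 k ^ (m.1 : ℕ) * sjX21 k ^ (m.2.1 : ℕ) * sjX2 k ^ (m.2.2 : ℕ))


namespace SJ
variable (k : Type*) [Field k] (p : ℕ)

abbrev Idx := Fin 2 × Fin p × Fin (2*p)
abbrev V := Idx p →₀ k

def e (a b c : ℕ) : V k p :=
  if h : a < 2 ∧ b < p ∧ c < 2*p then Finsupp.single (⟨a,h.1⟩,⟨b,h.2.1⟩,⟨c,h.2.2⟩) 1 else 0

lemma e_zero₂ {b : ℕ} (h : p ≤ b) (a c : ℕ) : e k p a b c = 0 := dif_neg (by omega)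
lemma e_zero₃ {c : ℕ} (h : 2*p ≤ c) (a b : ℕ) : e k p a b c = 0 := dif_neg (by omega)

lemma single_eq_e (i : Idx p) : Finsupp.single i (1:k) = e k p i.1 i.2.1 i.2.2 := by
  rw [e, dif_pos ⟨i.1.isLt, i.2.1.isLt, i.2.2.isLt⟩]

def mkE (v : Idx p → V k p) : Module.End k (V k p) :=
  Finsupp.lsum k fun i => LinearMap.toSpanSingleton k _ (v i)

lemma mkE_single (v : Idx p → V k p) (i : Idx p) : mkE k p v (Finsupp.single i 1) = v i := by
  simp [mkE]

lemma e_cases {a : ℕ} (ha : a < 2) (b c : ℕ) :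
    (∃ (ha : a<2) (hb : b<p) (hc : c<2*p),
      e k p a b c = Finsupp.single ((⟨a,ha⟩,⟨b,hb⟩,⟨c,hc⟩) : Idx p) 1) ∨
    ((p ≤ b ∨ 2*p ≤ c) ∧ e k p a b c = 0) := by
  by_cases h : a < 2 ∧ b < p ∧ c < 2*p
  · exact Or.inl ⟨h.1, h.2.1, h.2.2, dif_pos h⟩
  · exact Or.inr ⟨by omega, dif_neg h⟩

def X1 : Module.End k (V k p) :=
  mkE k p fun i => if (i.1:ℕ) = 0 then e k p 1 i.2.1 i.2.2 else 0

def X2 : Module.End k (V k p) :=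
  mkE k p fun i => if (i.1:ℕ) = 0 then e k p 0 i.2.1 (i.2.2+1) + ((i.2.1:ℕ):k) • e k p 1 i.2.1 i.2.2
    else e k p 0 (i.2.1+1) i.2.2 - e k p 1 i.2.1 (i.2.2+1)

lemma X1_e0 (b c : ℕ) : X1 k p (e k p 0 b c) = e k p 1 b c := by
  rcases e_cases k p (by omega : (0:ℕ) < 2) b c with ⟨ha,hb,hc,h⟩|⟨h,h0⟩
  · rw [h, X1, mkE_single]; rfl
  · rw [h0, map_zero]
    rcases h with h|h
    · rw [e_zero₂ k p h]
    · rw [e_zero₃ k p h]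

lemma X1_e1 (b c : ℕ) : X1 k p (e k p 1 b c) = 0 := by
  rcases e_cases k p (by omega : (1:ℕ) < 2) b c with ⟨ha,hb,hc,h⟩|⟨h,h0⟩
  · rw [h, X1, mkE_single]; rfl
  · rw [h0, map_zero]

lemma X2_e0 (b c : ℕ) : X2 k p (e k p 0 b c) = e k p 0 b (c+1) + (b:k) • e k p 1 b c := by
  rcases e_cases k p (by omega : (0:ℕ) < 2) b c with ⟨ha,hb,hc,h⟩|⟨h,h0⟩
  · rw [h, X2, mkE_single]; rfl
  · rw [h0, map_zero]
    rcases h with h|h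
    · rw [e_zero₂ k p h, e_zero₂ k p h]; simp
    · rw [e_zero₃ k p h, e_zero₃ k p (show 2*p ≤ c+1 by omega)]; simp

lemma X2_e1 (b c : ℕ) : X2 k p (e k p 1 b c) = e k p 0 (b+1) c - e k p 1 b (c+1) := by
  rcases e_cases k p (by omega : (1:ℕ) < 2) b c with ⟨ha,hb,hc,h⟩|⟨h,h0⟩
  · rw [h, X2, mkE_single]; rfl
  · rw [h0, map_zero]
    rcases h with h|h
    · rw [e_zero₂ k p h, e_zero₂ k p (show p ≤ b+1 by omega)]; simp
    · rw [e_zero₃ k p h, e_zero₃ k p (show 2*p ≤ c+1 by omega)]; simp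

def X21 : Module.End k (V k p) := X2 k p * X1 k p + X1 k p * X2 k p

lemma X21_e0 (b c : ℕ) : X21 k p (e k p 0 b c) = e k p 0 (b+1) c := by
  simp only [X21, LinearMap.add_apply, Module.End.mul_apply, X1_e0, X2_e1, X2_e0, map_add,
    map_smul, X1_e0, X1_e1, smul_zero]
  abel

lemma X21_e1 (b c : ℕ) : X21 k p (e k p 1 b c) = e k p 1 (b+1) c := by
  simp only [X21, LinearMap.add_apply, Module.End.mul_apply, X1_e1, X2_e1, map_zero, map_sub,
    X1_e0, X1_e1, zero_add, sub_zero]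

-- ext on basis vectors
lemma end_ext {f g : Module.End k (V k p)}
    (h0 : ∀ b c : ℕ, f (e k p 0 b c) = g (e k p 0 b c))
    (h1 : ∀ b c : ℕ, f (e k p 1 b c) = g (e k p 1 b c)) : f = g := by
  apply (Finsupp.basisSingleOne (R := k) (ι := Idx p)).ext
  intro i
  have : (Finsupp.basisSingleOne (R := k) (ι := Idx p)) i = Finsupp.single i 1 := rfl
  rw [this, single_eq_e]
  rcases i with ⟨a, b, c⟩
  have : (a:ℕ) = 0 ∨ (a:ℕ) = 1 := by omega
  rcases this with h|h <;> rw [h]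
  · exact h0 _ _
  · exact h1 _ _

lemma X1_sq : X1 k p * X1 k p = 0 := by
  apply end_ext <;> intro b c <;>
    simp [Module.End.mul_apply, X1_e0, X1_e1]

lemma rel2 : X2 k p * X21 k p - X21 k p * X2 k p - X1 k p * X21 k p = 0 := by
  apply end_ext <;> intro b c <;>
    simp only [LinearMap.sub_apply, Module.End.mul_apply, LinearMap.zero_apply,
      X21_e0, X21_e1, X2_e0, X2_e1, X1_e0, X1_e1, map_add, map_sub, map_smul,
      Nat.cast_add, Nat.cast_one]
  · module
  · module

-- powers of X21
lemma X21_pow_e0 (n : ℕ) : ∀ b c : ℕ, (X21 k p ^ n) (e k p 0 b c) = e k p 0 (b+n) c := by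
  induction n with
  | zero => simp
  | succ n ih =>
    intro b c
    rw [pow_succ, Module.End.mul_apply, X21_e0, ih]
    congr 1
    omega

lemma X21_pow_e1 (n : ℕ) : ∀ b c : ℕ, (X21 k p ^ n) (e k p 1 b c) = e k p 1 (b+n) c := by
  induction n with
  | zero => simp
  | succ n ih =>
    intro b c
    rw [pow_succ, Module.End.mul_apply, X21_e1, ih]
    congr 1
    omega

lemma X21_pow_p : X21 k p ^ p = 0 := by
  apply end_ext <;> intro b c
  · rw [X21_pow_e0, e_zero₂ k p (by omega)]; rfl
  · rw [X21_pow_e1, e_zero₂ k p (by omega)]; rfl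

def SS : Module.End k (V k p) := mkE k p fun i => e k p i.1 i.2.1 (i.2.2+2)
def TT : Module.End k (V k p) := mkE k p fun i => (((i.1:ℕ):k)+((i.2.1:ℕ):k)) • e k p (i.1) (i.2.1+1) i.2.2

lemma SS_e {a : ℕ} (ha : a < 2) (b c : ℕ) : SS k p (e k p a b c) = e k p a b (c+2) := by
  rcases e_cases k p ha b c with ⟨_,hb,hc,h⟩|⟨h,h0⟩
  · rw [h, SS, mkE_single]
  · rw [h0, map_zero]
    rcases h with h|h
    · rw [e_zero₂ k p h]
    · rw [e_zero₃ k p (show 2*p ≤ c+2 by omega)]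

lemma TT_e {a : ℕ} (ha : a < 2) (b c : ℕ) :
    TT k p (e k p a b c) = ((a:k)+(b:k)) • e k p a (b+1) c := by
  rcases e_cases k p ha b c with ⟨_,hb,hc,h⟩|⟨h,h0⟩
  · rw [h, TT, mkE_single]
  · rw [h0, map_zero]
    rcases h with h|h
    · rw [e_zero₂ k p (show p ≤ b+1 by omega), smul_zero]
    · rw [e_zero₃ k p h, smul_zero]

lemma X2_sq : X2 k p * X2 k p = SS k p + TT k p := by
  apply end_ext <;> intro b c <;>
    simp only [Module.End.mul_apply, LinearMap.add_apply, X2_e0, X2_e1, map_add, map_sub,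
      map_smul, SS_e k p (by omega : (0:ℕ)<2), SS_e k p (by omega : (1:ℕ)<2),
      TT_e k p (by omega : (0:ℕ)<2), TT_e k p (by omega : (1:ℕ)<2),
      Nat.cast_add, Nat.cast_one, Nat.cast_zero, zero_add]
  · module
  · module

lemma SS_TT_comm : Commute (SS k p) (TT k p) := by
  apply end_ext (f := SS k p * TT k p) (g := TT k p * SS k p) <;> intro b c <;>
    simp only [Module.End.mul_apply, SS_e k p (by omega : (0:ℕ)<2), SS_e k p (by omega : (1:ℕ)<2),
      TT_e k p (by omega : (0:ℕ)<2), TT_e k p (by omega : (1:ℕ)<2), map_smul]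

lemma SS_pow_e {a : ℕ} (ha : a < 2) (n : ℕ) : ∀ b c : ℕ,
    (SS k p ^ n) (e k p a b c) = e k p a b (c+2*n) := by
  induction n with
  | zero => simp
  | succ n ih =>
    intro b c
    rw [pow_succ, Module.End.mul_apply, SS_e k p ha, ih]
    congr 1
    omega

lemma SS_pow_p : SS k p ^ p = 0 := by
  apply end_ext <;> intro b c <;>
    rw [SS_pow_e k p (by omega), e_zero₃ k p (by omega)] <;> rfl

lemma TT_pow_e {a : ℕ} (ha : a < 2) (n : ℕ) : ∀ b c : ℕ,
    ∃ γ : k, (TT k p ^ n) (e k p a b c) = γ • e k p a (b+n) c := by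
  induction n with
  | zero => exact fun b c => ⟨1, by simp⟩
  | succ n ih =>
    intro b c
    obtain ⟨γ, hγ⟩ := ih (b+1) c
    refine ⟨((a:k)+(b:k)) * γ, ?_⟩
    rw [pow_succ, Module.End.mul_apply, TT_e k p ha, map_smul, hγ, smul_smul]
    congr 2
    omega

lemma TT_pow_p : TT k p ^ p = 0 := by
  apply end_ext <;> intro b c
  · obtain ⟨γ, hγ⟩ := TT_pow_e k p (by omega : (0:ℕ)<2) p b c
    rw [hγ, e_zero₂ k p (by omega), smul_zero]; rfl
  · obtain ⟨γ, hγ⟩ := TT_pow_e k p (by omega : (1:ℕ)<2) p b c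
    rw [hγ, e_zero₂ k p (by omega), smul_zero]; rfl

lemma X2_pow_2p (hp : p.Prime) [CharP k p] : X2 k p ^ (2*p) = 0 := by
  have h2 : X2 k p ^ (2*p) = (SS k p + TT k p) ^ p := by
    rw [← X2_sq, ← sq, ← pow_mul]
  rw [h2, (SS_TT_comm k p).add_pow]
  apply Finset.sum_eq_zero
  intro j hj
  rcases Nat.lt_or_ge 0 j with hj0 | hj0
  · rcases Nat.lt_or_ge j p with hjp | hjp
    · have hdvd : p ∣ p.choose j := hp.dvd_choose_self (by omega) hjp
      have : ((p.choose j : ℕ) : k) = 0 := (CharP.cast_eq_zero_iff k p _).mpr hdvd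
      have hcast : ((p.choose j : ℕ) : Module.End k (V k p)) =
          algebraMap k (Module.End k (V k p)) ((p.choose j : ℕ) : k) := by
        rw [map_natCast]
      rw [hcast, this, map_zero, mul_zero]
    · have : j = p := by simp only [Finset.mem_range] at hj; omega
      subst this
      rw [SS_pow_p, zero_mul, zero_mul]
  · have : j = 0 := by omega
    subst this
    rw [Nat.sub_zero, TT_pow_p, pow_zero, one_mul, zero_mul]

def phi : FreeAlgebra k (Fin 2) →ₐ[k] Module.End k (V k p) :=
  FreeAlgebra.lift k (fun i => if i = 0 then X1 k p else X2 k p)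

lemma phi_x1 : phi k p (sjX1 k) = X1 k p := by
  rw [sjX1, phi, FreeAlgebra.lift_ι_apply, if_pos rfl]

lemma phi_x2 : phi k p (sjX2 k) = X2 k p := by
  rw [sjX2, phi, FreeAlgebra.lift_ι_apply, if_neg (by decide)]

lemma phi_x21 : phi k p (sjX21 k) = X21 k p := by
  rw [sjX21, X21, map_add, map_mul, map_mul, phi_x1, phi_x2]

lemma phi_rel (hp : p.Prime) [CharP k p] ⦃x y : FreeAlgebra k (Fin 2)⦄
    (h : superJordanRel k p x y) : phi k p x = phi k p y := by
  obtain ⟨hy, hx⟩ := h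
  subst hy
  rw [map_zero]
  rcases hx with h|h|h|h <;> subst h
  · rw [map_pow, phi_x1, sq, X1_sq]
  · rw [map_sub, map_sub, map_mul, map_mul, map_mul, phi_x1, phi_x2, phi_x21]
    exact rel2 k p
  · rw [map_pow, phi_x21, X21_pow_p]
  · rw [map_pow, phi_x2, X2_pow_2p k p hp]

def psi (hp : p.Prime) [CharP k p] : RingQuot (superJordanRel k p) →ₐ[k] Module.End k (V k p) :=
  RingQuot.liftAlgHom k ⟨phi k p, phi_rel k p hp⟩

lemma psi_mk (hp : p.Prime) [CharP k p] (x : FreeAlgebra k (Fin 2)) :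
    psi k p hp (RingQuot.mkAlgHom k (superJordanRel k p) x) = phi k p x := by
  exact RingQuot.liftAlgHom_mkAlgHom_apply k (phi k p) (phi_rel k p hp) x

lemma X2_pow_e000 (c : ℕ) : (X2 k p ^ c) (e k p 0 0 0) = e k p 0 0 c := by
  induction c with
  | zero => simp
  | succ c ih => rw [pow_succ', Module.End.mul_apply, ih, X2_e0, Nat.cast_zero, zero_smul, add_zero]

lemma psi_mono (hp : p.Prime) [CharP k p] (m : Idx p) :
    (psi k p hp (superJordanMono k p m)) (e k p 0 0 0) =
      Finsupp.single m 1 := by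
  rw [superJordanMono, psi_mk, map_mul, map_mul, map_pow, map_pow, map_pow,
    phi_x1, phi_x2, phi_x21, Module.End.mul_apply, Module.End.mul_apply, X2_pow_e000,
    X21_pow_e0, zero_add, single_eq_e]
  have : (m.1:ℕ) = 0 ∨ (m.1:ℕ) = 1 := by omega
  rcases this with h|h <;> rw [h]
  · rw [pow_zero]; rfl
  · rw [pow_one, X1_e0]

def evalL (hp : p.Prime) [CharP k p] : RingQuot (superJordanRel k p) →ₗ[k] V k p where
  toFun q := psi k p hp q (e k p 0 0 0)
  map_add' x y := by simp [map_add]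
  map_smul' c x := by simp [map_smul]

lemma mono_li (hp : p.Prime) [CharP k p] : LinearIndependent k (superJordanMono k p) := by
  apply LinearIndependent.of_comp (evalL k p hp)
  have hfun : (⇑(evalL k p hp) ∘ superJordanMono k p) = fun m => Finsupp.single m (1:k) := by
    funext m
    exact psi_mono k p hp m
  rw [hfun]
  exact (Finsupp.basisSingleOne (R := k) (ι := Idx p)).linearIndependent

-- ## Spanning
def q1 : RingQuot (superJordanRel k p) := RingQuot.mkAlgHom k (superJordanRel k p) (sjX1 k)
def q2 : RingQuot (superJordanRel k p) := RingQuot.mkAlgHom k (superJordanRel k p) (sjX2 k)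
def q21 : RingQuot (superJordanRel k p) := RingQuot.mkAlgHom k (superJordanRel k p) (sjX21 k)

lemma q21_def : q21 k p = q2 k p * q1 k p + q1 k p * q2 k p := by
  rw [q21, q1, q2, sjX21, map_add, map_mul, map_mul]

lemma q1_sq : q1 k p * q1 k p = 0 := by
  have h := RingQuot.mkAlgHom_rel k
    (s := superJordanRel k p) (x := sjX1 k ^ 2) (y := 0) ⟨rfl, Or.inl rfl⟩
  rw [map_zero, map_pow, sq] at h
  exact h

lemma q2_q21 : q2 k p * q21 k p = q21 k p * q2 k p + q1 k p * q21 k p := by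
  have h := RingQuot.mkAlgHom_rel k (s := superJordanRel k p)
    (x := sjX2 k * sjX21 k - sjX21 k * sjX2 k - sjX1 k * sjX21 k) (y := 0)
    ⟨rfl, Or.inr (Or.inl rfl)⟩
  rw [map_zero, map_sub, map_sub, map_mul, map_mul, map_mul] at h
  rw [← q1, ← q2, ← q21, sub_sub, sub_eq_zero] at h
  exact h

lemma q21_pow_p' : q21 k p ^ p = 0 := by
  have h := RingQuot.mkAlgHom_rel k
    (s := superJordanRel k p) (x := sjX21 k ^ p) (y := 0) ⟨rfl, Or.inr (Or.inr (Or.inl rfl))⟩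
  rw [map_zero, map_pow] at h
  exact h

lemma q2_pow_2p' : q2 k p ^ (2*p) = 0 := by
  have h := RingQuot.mkAlgHom_rel k
    (s := superJordanRel k p) (x := sjX2 k ^ (2*p)) (y := 0) ⟨rfl, Or.inr (Or.inr (Or.inr rfl))⟩
  rw [map_zero, map_pow] at h
  exact h

lemma q1_q21_comm : Commute (q1 k p) (q21 k p) := by
  unfold Commute SemiconjBy
  have h0 : q1 k p * (q1 k p * q2 k p) = 0 := by rw [← mul_assoc, q1_sq, zero_mul]
  have h1 : q2 k p * q1 k p * q1 k p = 0 := by rw [mul_assoc, q1_sq, mul_zero]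
  rw [q21_def, mul_add, add_mul, h0, h1, add_zero, zero_add, mul_assoc]

lemma q2_q21_pow (b : ℕ) : q2 k p * q21 k p ^ b =
    q21 k p ^ b * q2 k p + (b:k) • (q1 k p * q21 k p ^ b) := by
  induction b with
  | zero => simp
  | succ b ih =>
    have comm : q21 k p ^ b * q1 k p = q1 k p * q21 k p ^ b :=
      ((q1_q21_comm k p).pow_right b).symm
    rw [pow_succ, ← mul_assoc, ih, add_mul, smul_mul_assoc,
      mul_assoc (q21 k p ^ b) (q2 k p) (q21 k p), q2_q21, mul_add,
      ← mul_assoc (q21 k p ^ b) (q21 k p) (q2 k p), ← pow_succ,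
      ← mul_assoc (q21 k p ^ b) (q1 k p) (q21 k p), comm,
      mul_assoc (q1 k p) (q21 k p ^ b) (q21 k p), ← pow_succ]
    push_cast
    rw [add_smul, one_smul]
    abel

def NQ (a b c : ℕ) : RingQuot (superJordanRel k p) := q1 k p ^ a * q21 k p ^ b * q2 k p ^ c

lemma q1_pow_zero {a : ℕ} (h : 2 ≤ a) : q1 k p ^ a = 0 := by
  obtain ⟨t, rfl⟩ : ∃ t, a = 2 + t := ⟨a - 2, by omega⟩
  rw [pow_add, pow_two, q1_sq, zero_mul]

lemma q21_pow_zero {b : ℕ} (h : p ≤ b) : q21 k p ^ b = 0 := by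
  obtain ⟨t, rfl⟩ : ∃ t, b = p + t := ⟨b - p, by omega⟩
  rw [pow_add, q21_pow_p', zero_mul]

lemma q2_pow_zero {c : ℕ} (h : 2*p ≤ c) : q2 k p ^ c = 0 := by
  obtain ⟨t, rfl⟩ : ∃ t, c = 2*p + t := ⟨c - 2*p, by omega⟩
  rw [pow_add, q2_pow_2p', zero_mul]

lemma mono_eq (m : Idx p) :
    superJordanMono k p m = NQ k p m.1 m.2.1 m.2.2 := by
  rw [superJordanMono, map_mul, map_mul, map_pow, map_pow, map_pow]
  rfl

lemma NQ_mem (a b c : ℕ) :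
    NQ k p a b c ∈ Submodule.span k (Set.range (superJordanMono k p)) := by
  by_cases h : a < 2 ∧ b < p ∧ c < 2*p
  · apply Submodule.subset_span
    exact ⟨(⟨a,h.1⟩,⟨b,h.2.1⟩,⟨c,h.2.2⟩), (mono_eq k p _).symm ▸ rfl⟩
  · have hz : NQ k p a b c = 0 := by
      rcases (by omega : 2 ≤ a ∨ p ≤ b ∨ 2*p ≤ c) with h|h|h
      · rw [NQ, q1_pow_zero k p h, zero_mul, zero_mul]
      · rw [NQ, q21_pow_zero k p h, mul_zero, zero_mul]
      · rw [NQ, q2_pow_zero k p h, mul_zero]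
    rw [hz]
    exact Submodule.zero_mem _

lemma q1_mul_NQ (a b c : ℕ) : q1 k p * NQ k p a b c = NQ k p (a+1) b c := by
  rw [NQ, NQ, ← mul_assoc, ← mul_assoc, ← pow_succ']

lemma q2_mul_NQ_mem (a b c : ℕ) :
    q2 k p * NQ k p a b c ∈ Submodule.span k (Set.range (superJordanMono k p)) := by
  match a with
  | 0 =>
    have : q2 k p * NQ k p 0 b c =
        NQ k p 0 b (c+1) + (b:k) • NQ k p 1 b c := by
      rw [NQ, NQ, NQ, pow_zero, pow_one, one_mul, ← mul_assoc, q2_q21_pow, add_mul,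
        smul_mul_assoc, mul_assoc (q21 k p ^ b) (q2 k p) (q2 k p ^ c), ← pow_succ']
    rw [this]
    exact Submodule.add_mem _ (NQ_mem k p 0 b (c+1))
      (Submodule.smul_mem _ _ (NQ_mem k p 1 b c))
  | 1 =>
    have hq2q1 : q2 k p * q1 k p = q21 k p - q1 k p * q2 k p := by
      rw [q21_def]; abel
    have : q2 k p * NQ k p 1 b c = NQ k p 0 (b+1) c - NQ k p 1 b (c+1) := by
      rw [NQ, NQ, NQ, pow_one, pow_zero, one_mul, ← mul_assoc, ← mul_assoc, hq2q1,
        sub_mul, sub_mul, ← pow_succ']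
      congr 1
      rw [mul_assoc (q1 k p) (q2 k p) (q21 k p ^ b), q2_q21_pow, mul_add, mul_smul_comm,
        ← mul_assoc (q1 k p) (q1 k p) (q21 k p ^ b), q1_sq, zero_mul, smul_zero, add_zero,
        ← mul_assoc (q1 k p) (q21 k p ^ b) (q2 k p),
        mul_assoc (q1 k p * q21 k p ^ b) (q2 k p) (q2 k p ^ c), ← pow_succ']
    rw [this]
    exact Submodule.sub_mem _ (NQ_mem k p 0 (b+1) c) (NQ_mem k p 1 b (c+1))
  | (n+2) =>
    have : NQ k p (n+2) b c = 0 := by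
      rw [NQ, q1_pow_zero k p (by omega), zero_mul, zero_mul]
    rw [this, mul_zero]
    exact Submodule.zero_mem _

lemma mk_mul_mem (y : FreeAlgebra k (Fin 2)) :
    ∀ s ∈ Submodule.span k (Set.range (superJordanMono k p)),
      RingQuot.mkAlgHom k (superJordanRel k p) y * s ∈
        Submodule.span k (Set.range (superJordanMono k p)) := by
  induction y using FreeAlgebra.induction with
  | grade0 r =>
    intro s hs
    rw [AlgHom.commutes, ← Algebra.smul_def]
    exact Submodule.smul_mem _ _ hs
  | grade1 x =>
    rcases (by omega : (x:ℕ) = 0 ∨ (x:ℕ) = 1) with hx | hx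
    · obtain rfl : x = 0 := Fin.ext hx
      intro s hs
      refine Submodule.span_induction ?_ ?_ ?_ ?_ hs
      · rintro _ ⟨m, rfl⟩
        rw [show RingQuot.mkAlgHom k (superJordanRel k p) (FreeAlgebra.ι k 0) = q1 k p from rfl,
          mono_eq, q1_mul_NQ]
        exact NQ_mem k p _ _ _
      · rw [mul_zero]; exact Submodule.zero_mem _
      · intro x y _ _ hx hy
        rw [mul_add]; exact Submodule.add_mem _ hx hy
      · intro t x _ hx
        rw [mul_smul_comm]; exact Submodule.smul_mem _ _ hx
    · obtain rfl : x = 1 := Fin.ext hx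
      intro s hs
      refine Submodule.span_induction ?_ ?_ ?_ ?_ hs
      · rintro _ ⟨m, rfl⟩
        rw [show RingQuot.mkAlgHom k (superJordanRel k p) (FreeAlgebra.ι k 1) = q2 k p from rfl,
          mono_eq]
        exact q2_mul_NQ_mem k p _ _ _
      · rw [mul_zero]; exact Submodule.zero_mem _
      · intro x y _ _ hx hy
        rw [mul_add]; exact Submodule.add_mem _ hx hy
      · intro t x _ hx
        rw [mul_smul_comm]; exact Submodule.smul_mem _ _ hx
  | mul x y hx hy =>
    intro s hs
    rw [map_mul, mul_assoc]
    exact hx _ (hy _ hs)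
  | add x y hx hy =>
    intro s hs
    rw [map_add, add_mul]
    exact Submodule.add_mem _ (hx _ hs) (hy _ hs)

lemma span_top : Submodule.span k (Set.range (superJordanMono k p)) = ⊤ := by
  rw [eq_top_iff]
  rintro q -
  obtain ⟨y, rfl⟩ := RingQuot.mkAlgHom_surjective k (superJordanRel k p) q
  have h1 : (1 : RingQuot (superJordanRel k p)) ∈
      Submodule.span k (Set.range (superJordanMono k p)) := by
    have : NQ k p 0 0 0 = 1 := by rw [NQ]; simp
    exact this ▸ NQ_mem k p 0 0 0
  have := mk_mul_mem k p y 1 h1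
  rwa [mul_one] at this

end SJ

theorem stmt_2 (k : Type*) [Field k] (p : ℕ) (hp : p.Prime) (hodd : Odd p) [CharP k p] :
    LinearIndependent k (superJordanMono k p) ∧
      Submodule.span k (Set.range (superJordanMono k p)) = ⊤ ∧
      Module.finrank k (RingQuot (superJordanRel k p)) = 4 * p ^ 2 := by
  refine ⟨SJ.mono_li k p hp, SJ.span_top k p, ?_⟩
  have B := Module.Basis.mk (SJ.mono_li k p hp) (by rw [SJ.span_top k p])
  rw [Module.finrank_eq_card_basis B]
  simp [Fintype.card_prod]
  ring
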